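/- arXiv:1808.05817 — 7 statements merged into one kernel-verified Lean document; each statement's English description precedes it below -/
import Mathlib

section
/- Let σ : ℂ → ℂ be analytic at 0 with σ(0) = 0 and deriv σ 0 = 1. If there exists an integer m ≥ 1 such that the m-fold iterate σ^[m] agrees with the identity function on a neighborhood of 0 (i.e. σ^[m] =ᶠ[𝓝 0] id), then σ itself agrees with the identity function on a neighborhood of 0 (σ =ᶠ[𝓝 0] id). -/
/-!
Unless `σ - id` vanishes near `0`, it has a zero of some finite order `n` at `0`, and `n ≥ 2`
because `σ 0 = 0` and `σ' 0 = 1`; so `σ z = z + c z ^ n + o(z ^ n)` with `c ≠ 0`. Since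
`σ^[j] z ~ z`, induction on `j` gives `σ^[j] z = z + j c z ^ n + o(z ^ n)`, and `σ^[m] = id`
then forces `m c = 0`.
-/

open Filter Asymptotics Topology

theorem AnalyticAt.exists_isLittleO_sub_pow_smul {𝕜 E : Type*} [NontriviallyNormedField 𝕜]
    [NormedAddCommGroup E] [NormedSpace 𝕜 E] {f : 𝕜 → E} {z₀ : 𝕜} {n : ℕ}
    (hf : AnalyticAt 𝕜 f z₀) (hn : analyticOrderAt f z₀ = n) :
    ∃ c ≠ 0, (fun z => f z - (z - z₀) ^ n • c) =o[𝓝 z₀] fun z => (z - z₀) ^ n := by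
  obtain ⟨g, hg, hg₀, hfg⟩ := hf.analyticOrderAt_eq_natCast.mp hn
  refine ⟨g z₀, hg₀, ?_⟩
  have hsmall : (fun z => g z - g z₀) =o[𝓝 z₀] fun _ => (1 : 𝕜) :=
    (isLittleO_one_iff 𝕜).mpr (tendsto_sub_nhds_zero_iff.mpr hg.continuousAt.tendsto)
  refine ((isBigO_refl (fun z => (z - z₀) ^ n) _).smul_isLittleO hsmall).congr' ?_ ?_
  · filter_upwards [hfg] with z hz
    rw [hz, smul_sub]
  · simp

theorem AnalyticAt.two_le_analyticOrderAt_sub_id {𝕜 : Type*} [NontriviallyNormedField 𝕜]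
    [CharZero 𝕜] [CompleteSpace 𝕜] {σ : 𝕜 → 𝕜} {z₀ : 𝕜} (hσ : AnalyticAt 𝕜 σ z₀)
    (h₀ : σ z₀ = z₀) (h₁ : deriv σ z₀ = 1) :
    2 ≤ analyticOrderAt (σ - id) z₀ := by
  refine (natCast_le_analyticOrderAt_iff_iteratedDeriv_eq_zero
    (hσ.sub analyticAt_id)).mpr fun i hi => ?_
  interval_cases i
  · simp [h₀]
  · rw [iteratedDeriv_one, deriv_sub hσ.differentiableAt differentiableAt_id, h₁,
      deriv_id, sub_self]

section Iterate

variable {𝕜 : Type*} [NontriviallyNormedField 𝕜] {σ : 𝕜 → 𝕜} {c : 𝕜} {n : ℕ}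

theorem isEquivalent_id_of_isLittleO_sub_sub_mul_pow (hn : 2 ≤ n)
    (h : (fun z => σ z - z - c * z ^ n) =o[𝓝 0] (· ^ n)) : σ ~[𝓝 0] id := by
  have hpow : (fun z : 𝕜 => z ^ n) =o[𝓝 0] id := isLittleO_pow_id (by omega)
  refine ((h.trans hpow).add ((isBigO_const_mul_self c _ _).trans_isLittleO hpow)).congr_left ?_
  intro z
  simp only [Pi.sub_apply, id]
  ring

theorem isLittleO_iterate_sub_sub_mul_pow (hn : 2 ≤ n)
    (h : (fun z => σ z - z - c * z ^ n) =o[𝓝 0] (· ^ n)) (j : ℕ) :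
    (fun z => σ^[j] z - z - j * c * z ^ n) =o[𝓝 0] (· ^ n) := by
  induction j with
  | zero => simp
  | succ j ih =>
    have hequiv : σ^[j] ~[𝓝 0] id := isEquivalent_id_of_isLittleO_sub_sub_mul_pow hn ih
    have htendsto : Tendsto σ^[j] (𝓝 0) (𝓝 0) := hequiv.symm.tendsto_nhds tendsto_id
    have hpow : (fun z => σ^[j] z ^ n) ~[𝓝 0] (· ^ n) := hequiv.pow n
    have hstep : (fun z => σ (σ^[j] z) - σ^[j] z - c * σ^[j] z ^ n) =o[𝓝 0] (· ^ n) :=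
      (h.comp_tendsto htendsto).trans_isBigO hpow.isBigO
    refine ((hstep.add (hpow.isLittleO.const_mul_left c)).add ih).congr_left ?_
    intro z
    simp only [Function.iterate_succ_apply', Pi.sub_apply]
    push_cast
    ring

theorem eq_zero_of_isLittleO_const_mul_pow {a : 𝕜}
    (h : (fun z : 𝕜 => a * z ^ n) =o[𝓝 0] (· ^ n)) : a = 0 := by
  by_contra ha
  have hne : ∃ᶠ z in 𝓝 (0 : 𝕜), z ^ n ≠ 0 :=
    (eventually_nhdsWithin_of_forall (s := {0}ᶜ) fun z hz => pow_ne_zero n hz).frequently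
      |>.filter_mono nhdsWithin_le_nhds
  exact isLittleO_irrefl hne ((isLittleO_const_mul_left_iff ha).mp h)

theorem eq_zero_of_isLittleO_sub_sub_mul_pow_of_iterate_eventuallyEq_id [CharZero 𝕜]
    {m : ℕ} (hn : 2 ≤ n) (h : (fun z => σ z - z - c * z ^ n) =o[𝓝 0] (· ^ n)) (hm : m ≠ 0)
    (hiter : σ^[m] =ᶠ[𝓝 0] id) : c = 0 := by
  have hmc : (fun z => -(m * c) * z ^ n) =o[𝓝 0] (· ^ n) :=
    (isLittleO_iterate_sub_sub_mul_pow hn h m).congr' (by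
      filter_upwards [hiter] with z hz
      simp [hz]) EventuallyEq.rfl
  simpa [hm] using eq_zero_of_isLittleO_const_mul_pow hmc

end Iterate

/-- If `σ : ℂ → ℂ` is analytic at `0` with `σ 0 = 0` and `deriv σ 0 = 1`, and some
`m`-fold iterate of `σ` (with `m ≥ 1`) agrees with the identity near `0`, then `σ`
agrees with the identity near `0`. -/
theorem iterate_eventually_id_of_analytic (σ : ℂ → ℂ)
    (hσ : AnalyticAt ℂ σ 0) (h0 : σ 0 = 0) (h1 : deriv σ 0 = 1)
    (h : ∃ m : ℕ, 1 ≤ m ∧ σ^[m] =ᶠ[nhds (0 : ℂ)] id) :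
    σ =ᶠ[nhds (0 : ℂ)] id := by
  obtain ⟨m, hm, hiter⟩ := h
  by_contra hne
  obtain ⟨n, hn⟩ : ∃ n : ℕ, (n : ℕ∞) = analyticOrderAt (σ - id) 0 :=
    ENat.ne_top_iff_exists.mp fun htop => hne <| by
      filter_upwards [analyticOrderAt_eq_top.mp htop] with z hz
      exact sub_eq_zero.mp hz
  have hn2 : 2 ≤ n := by exact_mod_cast hn ▸ hσ.two_le_analyticOrderAt_sub_id h0 h1
  obtain ⟨c, hc, hexp⟩ := (hσ.sub analyticAt_id).exists_isLittleO_sub_pow_smul hn.symm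
  exact hc <| eq_zero_of_isLittleO_sub_sub_mul_pow_of_iterate_eventuallyEq_id hn2
    (by simpa [mul_comm] using hexp) (by omega) hiter
end

section
/- Let f be a formal power series over ℂ with constant coefficient 0 and coefficient of X equal to 1. If there exists an integer m ≥ 1 such that the m-fold composite f^{∘m} equals X, then f = X. -/
open PowerSeries

/-- Substitution of the power series `g` into the power series `f`, i.e. `f ∘ g = f(g(X))`.
For `g` with zero constant coefficient, the coefficient of `X^k` in `f(g(X))` is
`∑_{n ≤ k} (coeff n f) * (coeff k (g^n))`, since `coeff k (g^n) = 0` for `n > k`. -/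
noncomputable def PowerSeries.compose (f g : PowerSeries ℂ) : PowerSeries ℂ :=
  PowerSeries.mk fun k =>
    ∑ n ∈ Finset.range (k + 1), PowerSeries.coeff n f * PowerSeries.coeff k (g ^ n)

/-- The `m`-fold composite `f^{∘m}`: `f^{∘0} = X` and `f^{∘(m+1)} = f ∘ f^{∘m}`. -/
noncomputable def PowerSeries.iterComp (f : PowerSeries ℂ) : ℕ → PowerSeries ℂ
  | 0 => PowerSeries.X
  | m + 1 => PowerSeries.compose f (PowerSeries.iterComp f m)

/-!
If `f ≠ X`, write `f = X + a X^d + O(X^(d+1))` with `a ≠ 0` and `d ≥ 2`. Modulo `X^(d+1)`,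
composing with `f` just adds `a X^d`, so `f^{∘m} = X + m a X^d + O(X^(d+1))`, which is not `X`
because `ℂ` has characteristic zero.
-/

theorem pow_add_dvd_pow_succ_sub_pow_succ {R : Type*} [CommRing R] {a x : R} {k : ℕ}
    (hx : a ∣ x) (h : a ^ k ∣ x - a) (n : ℕ) : a ^ (k + n) ∣ x ^ (n + 1) - a ^ (n + 1) := by
  induction n with
  | zero => simpa using h
  | succ n ih =>
    rw [show x ^ (n + 2) - a ^ (n + 2) = x * (x ^ (n + 1) - a ^ (n + 1)) + a ^ (n + 1) * (x - a)
      by ring]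
    refine dvd_add ?_ ?_
    · rw [show k + (n + 1) = 1 + (k + n) by omega, pow_add, pow_one]
      exact mul_dvd_mul hx ih
    · rw [show k + (n + 1) = (n + 1) + k by omega, pow_add]
      exact mul_dvd_mul_left _ h

namespace PowerSeries

theorem coeff_pow_sub_coeff_X_pow_of_X_pow_dvd_sub_X {R : Type*} [CommRing R] {k i : ℕ}
    {g : R⟦X⟧} (hk : 1 ≤ k) (hg : X ^ k ∣ g - X) (hi : i ≤ k) (n : ℕ) :
    coeff i (g ^ n) - coeff i (X ^ n) = if n = 1 then coeff i (g - X) else 0 := by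
  match n with
  | 0 => simp
  | 1 => simp
  | n + 2 =>
    have hX : X ∣ g := dvd_sub_self_right.mp ((dvd_pow_self X (by omega)).trans hg)
    have := X_pow_dvd_iff.mp (pow_add_dvd_pow_succ_sub_pow_succ hX hg (n + 1)) i (by omega)
    simpa [sub_eq_zero] using this

theorem coeff_compose (f g : ℂ⟦X⟧) (i : ℕ) :
    coeff i (compose f g) = ∑ n ∈ Finset.range (i + 1), coeff n f * coeff i (g ^ n) :=
  coeff_mk _ _

@[simp]
theorem compose_X (f : ℂ⟦X⟧) : compose f X = f := by
  ext i
  simp [coeff_compose, coeff_X_pow]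

theorem X_pow_succ_dvd_compose_sub {k : ℕ} (f : ℂ⟦X⟧) {g : ℂ⟦X⟧} (hk : 1 ≤ k)
    (hg : X ^ k ∣ g - X) : X ^ (k + 1) ∣ compose f g - f - C (coeff 1 f) * (g - X) := by
  rw [X_pow_dvd_iff]
  intro i hi
  have hcoeff : coeff i (compose f g) - coeff i (compose f X) = coeff 1 f * coeff i (g - X) := by
    rw [coeff_compose, coeff_compose, ← Finset.sum_sub_distrib]
    simp_rw [← mul_sub,
      coeff_pow_sub_coeff_X_pow_of_X_pow_dvd_sub_X hk hg (Nat.lt_succ_iff.mp hi), mul_ite,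
      mul_zero, Finset.sum_ite_eq', Finset.mem_range]
    split_ifs
    · rfl
    · rw [X_pow_dvd_iff.mp hg i (by omega), mul_zero]
  rw [compose_X] at hcoeff
  simp [hcoeff]

theorem X_pow_succ_dvd_iterComp_sub {k : ℕ} {f : ℂ⟦X⟧} (hk : 2 ≤ k) (hf : X ^ k ∣ f - X)
    (m : ℕ) : X ^ (k + 1) ∣ iterComp f m - X - m • (f - X) := by
  induction m with
  | zero => simp [iterComp]
  | succ m ih =>
    have h1 : coeff 1 f = 1 := by
      simpa [sub_eq_zero] using X_pow_dvd_iff.mp hf 1 (by omega)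
    have hg : X ^ k ∣ iterComp f m - X := by
      have := dvd_add ((pow_dvd_pow X k.le_succ).trans ih) (dvd_nsmul_of_dvd m hf)
      simpa using this
    have := dvd_add (X_pow_succ_dvd_compose_sub f (by omega) hg) ih
    rw [h1, map_one, one_mul] at this
    convert this using 1
    rw [iterComp, succ_nsmul]
    ring

end PowerSeries

/-- If `f ∈ ℂ⟦X⟧` has constant coefficient `0` and coefficient of `X` equal to `1`, and some
`m`-fold composite `f^{∘m}` with `m ≥ 1` equals `X`, then `f = X`. -/
theorem powerSeries_eq_X_of_iterComp_eq_X (f : PowerSeries ℂ)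
    (h0 : PowerSeries.coeff 0 f = 0) (h1 : PowerSeries.coeff 1 f = 1)
    (h : ∃ m : ℕ, 1 ≤ m ∧ PowerSeries.iterComp f m = PowerSeries.X) :
    f = PowerSeries.X := by
  obtain ⟨m, hm, hX⟩ := h
  by_contra hne
  set d := (f - X).order.toNat
  have hd : coeff d (f - X) ≠ 0 := coeff_order (sub_ne_zero.mpr hne)
  have hd2 : 2 ≤ d := by
    by_contra! hlt
    interval_cases d
    · exact hd (by rw [map_sub, h0, coeff_zero_X, sub_zero])
    · exact hd (by rw [map_sub, h1, coeff_one_X, sub_self])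
  have hmd := X_pow_dvd_iff.mp (X_pow_succ_dvd_iterComp_sub hd2 X_pow_order_dvd m) d
    d.lt_succ_self
  rw [hX, sub_self, zero_sub, map_neg, neg_eq_zero, map_nsmul, nsmul_eq_mul] at hmd
  exact hd ((mul_eq_zero.mp hmd).resolve_left (Nat.cast_ne_zero.mpr (by omega)))
end

section
/- Let G be a finite group and σ : G → (ℂ → ℂ) a family of functions such that: (i) for every g ∈ G, σ g is analytic at 0 and σ g (0) = 0; (ii) σ 1 agrees with the identity on a neighborhood of 0; (iii) for all g, h ∈ G, σ (g·h) agrees with σ g ∘ σ h on a neighborhood of 0; (iv) the action is faithful, i.e. if σ g agrees with the identity on a neighborhood of 0 then g = 1. Define θ : G → ℂ by θ(g) = deriv (σ g) 0. Then θ(1) = 1, θ(g·h) = θ(g)·θ(h) for all g, h ∈ G, θ(g)^{|G|} = 1 for every g ∈ G (so each θ(g) is a |G|-th root of unity, in particular nonzero), θ is injective, and consequently G is a cyclic group. -/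
/-!
Differentiating the relations `σ (g * h) = σ g ∘ σ h` at the common fixed point `0` makes
`g ↦ (σ g)'(0)` a homomorphism into `ℂˣ`, and a finite subgroup of the units of a field is
cyclic. The whole point is injectivity: if `f = σ g` has `f'(0) = 1` but is not the identity germ,
then `f z = z + c z ^ k + O(z ^ (k + 1))` with `c ≠ 0` and `k ≥ 2`, and the iterates satisfy
`f^[m] z = z + m c z ^ k + O(z ^ (k + 1))`, so no iterate `f^[N]` with `N ≠ 0` is the identity,
whereas `f^[|G|]` is.
-/

open Filter Topology

section IterateGerm

variable {𝕜 : Type*} [NontriviallyNormedField 𝕜]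

theorem tendsto_iterate_sub_div_pow {f g : 𝕜 → 𝕜} {k : ℕ} (hk : 2 ≤ k)
    (hfg : ∀ᶠ z in 𝓝 0, f z - z = z ^ k * g z) (hg : ContinuousAt g 0) (m : ℕ) :
    Tendsto (fun z => (f^[m] z - z) / z ^ k) (𝓝[≠] 0) (𝓝 (m * g 0)) := by
  induction m with
  | zero => simp
  | succ m ih =>
    have hratio : Tendsto (fun z => f^[m] z / z) (𝓝[≠] 0) (𝓝 1) := by
      have hpow : Tendsto (fun z : 𝕜 => z ^ (k - 1)) (𝓝[≠] 0) (𝓝 0) := by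
        simpa [zero_pow (by omega : k - 1 ≠ 0)] using
          ((continuous_pow (k - 1)).tendsto (0 : 𝕜)).mono_left nhdsWithin_le_nhds
      refine ((hpow.mul ih).const_add 1).congr' ?_ |>.trans (by simp)
      filter_upwards [self_mem_nhdsWithin] with z (hz : z ≠ 0)
      rw [show z ^ k = z ^ (k - 1) * z by rw [← pow_succ]; congr; omega]
      field_simp
      ring
    have hzero : Tendsto (fun z => f^[m] z) (𝓝[≠] 0) (𝓝 0) := by
      simpa using (hratio.mul (tendsto_nhdsWithin_of_tendsto_nhds tendsto_id)).congr'
        (by filter_upwards [self_mem_nhdsWithin] with z (hz : z ≠ 0) using by simp [hz])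
    have hstep := ((hratio.pow k).mul (hg.tendsto.comp hzero)).add ih
    rw [show ((m + 1 : ℕ) : 𝕜) * g 0 = 1 ^ k * g 0 + m * g 0 by push_cast; ring]
    refine hstep.congr' ?_
    filter_upwards [hzero.eventually hfg, self_mem_nhdsWithin] with z hfz (hz : z ≠ 0)
    rw [Function.iterate_succ_apply', show f (f^[m] z) - z = (f (f^[m] z) - f^[m] z) + (f^[m] z - z)
      by ring, hfz, div_pow, Function.comp_apply]
    field_simp

variable [CompleteSpace 𝕜] [CharZero 𝕜]

theorem eventuallyEq_id_of_iterate_eventuallyEq_id {f : 𝕜 → 𝕜} (hf : AnalyticAt 𝕜 f 0)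
    (hf0 : f 0 = 0) (hf' : deriv f 0 = 1) {N : ℕ} (hN : N ≠ 0) (hfN : f^[N] =ᶠ[𝓝 0] id) :
    f =ᶠ[𝓝 0] id := by
  have hsub : AnalyticAt 𝕜 (fun z => f z - z) 0 := hf.sub analyticAt_id
  have htwo : (2 : ℕ) ≤ analyticOrderAt (fun z => f z - z) 0 := by
    refine (natCast_le_analyticOrderAt_iff_iteratedDeriv_eq_zero hsub).mpr fun i hi => ?_
    interval_cases i
    · simp [hf0]
    · simp [deriv_fun_sub hf.differentiableAt differentiableAt_fun_id, hf']
  by_cases htop : analyticOrderAt (fun z => f z - z) 0 = ⊤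
  · filter_upwards [analyticOrderAt_eq_top.mp htop] with z hz
    exact sub_eq_zero.mp hz
  obtain ⟨g, hg, hg0, hfg⟩ := hsub.analyticOrderAt_ne_top.mp htop
  set k := analyticOrderNatAt (fun z => f z - z) 0
  have hk : 2 ≤ k := by
    rw [← Nat.cast_analyticOrderNatAt htop] at htwo
    exact_mod_cast htwo
  have hlim := tendsto_iterate_sub_div_pow hk (hfg.mono fun z hz => by simpa using hz)
    hg.continuousAt N
  have hlim0 : Tendsto (fun z => (f^[N] z - z) / z ^ k) (𝓝[≠] 0) (𝓝 0) :=
    tendsto_const_nhds.congr' <| by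
      filter_upwards [nhdsWithin_le_nhds hfN] with z hz
      simp [hz]
  exact absurd (tendsto_nhds_unique hlim hlim0) (mul_ne_zero (Nat.cast_ne_zero.mpr hN) hg0)

end IterateGerm

theorem eventuallyEq_iterate_of_map_pow {M α : Type*} [Monoid M] {σ : M → α → α} {l : Filter α}
    (hone : σ 1 =ᶠ[l] id) (hmul : ∀ g h : M, σ (g * h) =ᶠ[l] σ g ∘ σ h) (g : M) (m : ℕ) :
    σ (g ^ m) =ᶠ[l] (σ g)^[m] := by
  induction m with
  | zero => simpa using hone
  | succ m ih =>
    rw [pow_succ', Function.iterate_succ']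
    exact (hmul g (g ^ m)).trans (ih.fun_comp (σ g))

/-- For a finite group `G` acting faithfully by local analytic germs at `0 ∈ ℂ` fixing `0`,
the derivative at `0` gives an injective homomorphism `θ : G → ℂ` into the `|G|`-th roots
of unity; consequently `G` is cyclic. -/
theorem stabilizer_cyclic (G : Type*) [Group G] [Finite G] (σ : G → ℂ → ℂ)
    (hana : ∀ g : G, AnalyticAt ℂ (σ g) 0)
    (hfix : ∀ g : G, σ g 0 = 0)
    (hone : σ 1 =ᶠ[nhds (0 : ℂ)] id)
    (hmul : ∀ g h : G, σ (g * h) =ᶠ[nhds (0 : ℂ)] (σ g ∘ σ h))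
    (hfaithful : ∀ g : G, σ g =ᶠ[nhds (0 : ℂ)] id → g = 1) :
    deriv (σ 1) 0 = 1 ∧
    (∀ g h : G, deriv (σ (g * h)) 0 = deriv (σ g) 0 * deriv (σ h) 0) ∧
    (∀ g : G, (deriv (σ g) 0) ^ (Nat.card G) = 1) ∧
    Function.Injective (fun g : G => deriv (σ g) 0) ∧
    IsCyclic G := by
  have hθmul (g h : G) : deriv (σ (g * h)) 0 = deriv (σ g) 0 * deriv (σ h) 0 := by
    have hg : DifferentiableAt ℂ (σ g) (σ h 0) := by
      rw [hfix h]; exact (hana g).differentiableAt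
    rw [(hmul g h).deriv_eq, deriv_comp 0 hg (hana h).differentiableAt, hfix h]
  let θ : G →* ℂ :=
    { toFun g := deriv (σ g) 0
      map_one' := by simpa using hone.deriv_eq
      map_mul' := hθmul }
  have hpow (g : G) : θ g ^ Nat.card G = 1 := by rw [← map_pow, pow_card_eq_one', map_one]
  have hker (g : G) (hg : θ g = 1) : g = 1 := by
    refine hfaithful g (eventuallyEq_id_of_iterate_eventuallyEq_id (hana g) (hfix g) hg
      (Nat.card_pos (α := G)).ne' ?_)
    have hid : σ (g ^ Nat.card G) =ᶠ[𝓝 0] id := by rwa [pow_card_eq_one']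
    exact (eventuallyEq_iterate_of_map_pow hone hmul g _).symm.trans hid
  have hinj : Function.Injective θ := (injective_iff_map_eq_one θ).mpr hker
  exact ⟨θ.map_one, hθmul, hpow, hinj, isCyclic_of_injective_ringHom θ hinj⟩
end

section
/- Let m ≥ 1, let g' be a natural number, and let m₀ be a divisor of m. Then Nat.card { a : Fin (2g') → ZMod m // Nat.gcd m₀ (Finset.univ.gcd (fun i => (a i).val)) = 1 } multiplied by ∏_{p ∈ m₀.primeFactors} p^{2g'} equals m^{2g'} multiplied by ∏_{p ∈ m₀.primeFactors} (p^{2g'} − 1). Equivalently, the number of tuples (a₁,…,a_{2g'}) ∈ (ℤ/mℤ)^{2g'} with gcd(a₁,…,a_{2g'}, m₀) = 1 is m^{2g'} ∏_{p | m₀ prime} (1 − p^{−2g'}). -/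
open Finset

/-- Generic fiber-counting: if `α ≃ β × γ`, tuples in `α` whose first-component tuple
satisfies `P` number `(count of b with P b) * |γ|^n`. -/
theorem count_fst_pred {α β γ : Type*} [Finite γ] (E : α ≃ β × γ) {n : ℕ}
    (P : (Fin n → β) → Prop) :
    Nat.card { a : Fin n → α // P fun i => (E (a i)).1 }
      = Nat.card { b : Fin n → β // P b } * Nat.card γ ^ n := by
  have e : { a : Fin n → α // P fun i => (E (a i)).1 }
      ≃ { b : Fin n → β // P b } × (Fin n → γ) :=
    { toFun := fun a => (⟨fun i => (E (a.1 i)).1, a.2⟩, fun i => (E (a.1 i)).2)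
      invFun := fun bc => ⟨fun i => E.symm (bc.1.1 i, bc.2 i), by
        convert bc.1.2 using 2; simp⟩
      left_inv := fun a => by ext i; simp
      right_inv := fun bc => by
        refine Prod.ext (Subtype.ext ?_) ?_ <;> ext i <;> simp }
  rw [Nat.card_congr e, Nat.card_prod, Nat.card_fun]
  simp

/-- The number of tuples `(a₁, …, a_{2g'}) ∈ (ℤ/mℤ)^{2g'}` with
`gcd(a₁, …, a_{2g'}, m₀) = 1` is `m^{2g'} ∏_{p | m₀ prime} (1 − p^{−2g'})`, stated in the
denominator-cleared form: the count times `∏_{p | m₀} p^{2g'}` equals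
`m^{2g'} ∏_{p | m₀} (p^{2g'} − 1)`. -/
theorem card_gcd_one_tuples (m : ℕ) (hm : 1 ≤ m) (g' : ℕ) (m₀ : ℕ) (hm₀ : m₀ ∣ m) :
    Nat.card { a : Fin (2 * g') → ZMod m //
        Nat.gcd m₀ (Finset.univ.gcd fun i => (a i).val) = 1 } *
      ∏ p ∈ m₀.primeFactors, p ^ (2 * g')
    = m ^ (2 * g') * ∏ p ∈ m₀.primeFactors, (p ^ (2 * g') - 1) := by
  set n := 2 * g' with hn
  haveI : NeZero m := ⟨by omega⟩
  have hm₀pos : 0 < m₀ := Nat.pos_of_dvd_of_pos hm₀ hm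
  have hpdvd : ∀ p ∈ m₀.primeFactors, p ∣ m :=
    fun p hp => (Nat.dvd_of_mem_primeFactors hp).trans hm₀
  haveI inst1 : ∀ p : m₀.primeFactors, NeZero (p : ℕ) :=
    fun p => ⟨(Nat.prime_of_mem_primeFactors p.2).pos.ne'⟩
  set q := ∏ p ∈ m₀.primeFactors, p with hq
  have hqdvd : q ∣ m := (Nat.prod_primeFactors_dvd m₀).trans hm₀
  have hqpos : 0 < q := Nat.pos_of_dvd_of_pos hqdvd hm
  haveI : NeZero q := ⟨hqpos.ne'⟩
  -- the two reduction homs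
  set T := Π p : m₀.primeFactors, ZMod (p : ℕ) with hT
  let Φ : ZMod m →+* T := Pi.ringHom fun p => ZMod.castHom (hpdvd p p.2) (ZMod (p : ℕ))
  let ψ : ZMod q →+* T :=
    Pi.ringHom fun p => ZMod.castHom (Finset.dvd_prod_of_mem _ p.2) (ZMod (p : ℕ))
  have hΦ : ∀ (x : ZMod m) (p : m₀.primeFactors), (Φ x p = 0 ↔ (p : ℕ) ∣ x.val) := by
    intro x p
    show (ZMod.castHom (hpdvd p p.2) (ZMod (p : ℕ)) x = 0 ↔ _)
    rw [ZMod.castHom_apply,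
      show (ZMod.cast x : ZMod (p : ℕ)) = ((x.val : ℕ) : ZMod (p : ℕ)) from
        (ZMod.natCast_val x).symm,
      ZMod.natCast_eq_zero_iff]
  have hcardT : Fintype.card T = q := by
    calc Fintype.card T = ∏ p : m₀.primeFactors, Fintype.card (ZMod (p : ℕ)) :=
          Fintype.card_pi
      _ = ∏ p : m₀.primeFactors, (p : ℕ) := Finset.prod_congr rfl fun p _ => ZMod.card _
      _ = q := Finset.prod_coe_sort m₀.primeFactors (fun p => p)
  have hψinj : Function.Injective ψ := by
    rw [injective_iff_map_eq_zero]
    intro y hy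
    have hdvd : ∀ p ∈ m₀.primeFactors, p ∣ y.val := by
      intro p hp
      have h := congrFun hy ⟨p, hp⟩
      show (p : ℕ) ∣ y.val
      rw [← ZMod.natCast_eq_zero_iff, ZMod.natCast_val]
      exact h
    have hqd : q ∣ y.val :=
      Finset.prod_primes_dvd _ (fun p hp => (Nat.prime_of_mem_primeFactors hp).prime) hdvd
    have := ZMod.val_lt y
    have h0 : y.val = 0 := Nat.eq_zero_of_dvd_of_lt hqd (by simpa using this)
    exact (ZMod.val_eq_zero y).mp h0
  have hψbij : Function.Bijective ψ :=
    (Fintype.bijective_iff_injective_and_card ψ).mpr ⟨hψinj, by rw [hcardT, ZMod.card]⟩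
  have hΦsurj : Function.Surjective Φ := by
    intro t
    obtain ⟨y, hy⟩ := hψbij.surjective t
    refine ⟨((y.val : ℕ) : ZMod m), ?_⟩
    funext p
    have : Φ ((y.val : ℕ) : ZMod m) p = ((y.val : ℕ) : ZMod (p : ℕ)) := by
      show ZMod.castHom (hpdvd p p.2) (ZMod (p : ℕ)) _ = _
      rw [map_natCast]
    rw [this, ← hy]
    show _ = ZMod.castHom (Finset.dvd_prod_of_mem _ p.2) (ZMod (p : ℕ)) y
    rw [ZMod.castHom_apply, ZMod.natCast_val]
  -- split ZMod m as T × ker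
  let s : T → ZMod m := Function.surjInv hΦsurj
  have hs : ∀ t, Φ (s t) = t := Function.surjInv_eq hΦsurj
  let E : ZMod m ≃ T × { x : ZMod m // Φ x = 0 } :=
    { toFun := fun x => (Φ x, ⟨x - s (Φ x), by rw [map_sub, hs, sub_self]⟩)
      invFun := fun tz => tz.2.1 + s tz.1
      left_inv := fun x => by simp
      right_inv := fun tz => by
        have h1 : Φ (tz.2.1 + s tz.1) = tz.1 := by rw [map_add, tz.2.2, hs, zero_add]
        refine Prod.ext h1 (Subtype.ext ?_)
        simp [h1] }
  have hqk : q * Nat.card { x : ZMod m // Φ x = 0 } = m := by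
    have := Nat.card_congr E
    rw [Nat.card_zmod, Nat.card_prod, Nat.card_eq_fintype_card (α := T), hcardT] at this
    omega
  -- rewrite the gcd condition
  have key : ∀ a : Fin n → ZMod m,
      (Nat.gcd m₀ (Finset.univ.gcd fun i => (a i).val) = 1) ↔
      (∀ p : m₀.primeFactors, ∃ i, (E (a i)).1 p ≠ 0) := by
    intro a
    have hE1 : ∀ x : ZMod m, (E x).1 = Φ x := fun x => rfl
    constructor
    · intro h p
      by_contra hc
      push_neg at hc
      have hall : ∀ i, (p : ℕ) ∣ (a i).val := fun i => (hΦ (a i) p).mp (by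
        rw [← hE1]; exact hc i)
      have h1 : (p : ℕ) ∣ Finset.univ.gcd fun i => (a i).val :=
        Finset.dvd_gcd fun i _ => hall i
      have h2 : (p : ℕ) ∣ m₀ := Nat.dvd_of_mem_primeFactors p.2
      have : (p : ℕ) ∣ 1 := h ▸ Nat.dvd_gcd h2 h1
      exact (Nat.prime_of_mem_primeFactors p.2).one_lt.ne'
        (Nat.dvd_one.mp this)
    · intro h
      by_contra hd
      set d := Nat.gcd m₀ (Finset.univ.gcd fun i => (a i).val) with hdd
      have hd0 : d ≠ 0 := fun h0 => hm₀pos.ne' (Nat.eq_zero_of_gcd_eq_zero_left h0)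
      have hd2 : 2 ≤ d := by omega
      have hp : d.minFac.Prime := Nat.minFac_prime (by omega)
      have hpm₀ : d.minFac ∣ m₀ := (Nat.minFac_dvd d).trans (Nat.gcd_dvd_left _ _)
      have hpmem : d.minFac ∈ m₀.primeFactors :=
        Nat.mem_primeFactors.mpr ⟨hp, hpm₀, hm₀pos.ne'⟩
      obtain ⟨i, hi⟩ := h ⟨d.minFac, hpmem⟩
      apply hi
      rw [hE1]
      rw [hΦ]
      exact ((Nat.minFac_dvd d).trans (Nat.gcd_dvd_right _ _)).trans
        (Finset.gcd_dvd (Finset.mem_univ i))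
  rw [Nat.card_congr (Equiv.subtypeEquivRight key)]
  rw [count_fst_pred E (fun b => ∀ p : m₀.primeFactors, ∃ i, b i p ≠ 0)]
  -- count on the product side
  have hcount : Nat.card { b : Fin n → T // ∀ p : m₀.primeFactors, ∃ i, b i p ≠ 0 }
      = ∏ p ∈ m₀.primeFactors, (p ^ n - 1) := by
    have e1 : { b : Fin n → T // ∀ p : m₀.primeFactors, ∃ i, b i p ≠ 0 }
        ≃ Π p : m₀.primeFactors, { d : Fin n → ZMod (p : ℕ) // ∃ i, d i ≠ 0 } :=
      ((Equiv.piComm fun (_ : Fin n) (p : m₀.primeFactors) => ZMod (p : ℕ)).subtypeEquiv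
        (p := fun b => ∀ p : m₀.primeFactors, ∃ i, b i p ≠ 0)
        (q := fun c => ∀ p : m₀.primeFactors, ∃ i, c p i ≠ 0)
        (fun b => Iff.rfl)).trans
      (Equiv.subtypePiEquivPi
        (p := fun (p : m₀.primeFactors) (d : Fin n → ZMod (p : ℕ)) => ∃ i, d i ≠ 0))
    have single : ∀ p : m₀.primeFactors,
        Nat.card { d : Fin n → ZMod (p : ℕ) // ∃ i, d i ≠ 0 } = (p : ℕ) ^ n - 1 := by
      intro p
      have h2 : ∀ d : Fin n → ZMod (p : ℕ), (∃ i, d i ≠ 0) ↔ ¬ d = 0 := by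
        intro d
        simp [funext_iff]
      rw [Nat.card_congr (Equiv.subtypeEquivRight h2), Nat.card_eq_fintype_card,
        Fintype.card_subtype_compl, Fintype.card_subtype_eq, Fintype.card_fun,
        ZMod.card, Fintype.card_fin]
    calc Nat.card { b : Fin n → T // ∀ p : m₀.primeFactors, ∃ i, b i p ≠ 0 }
        = ∏ p : m₀.primeFactors,
            Nat.card { d : Fin n → ZMod (p : ℕ) // ∃ i, d i ≠ 0 } := by
          rw [Nat.card_congr e1, Nat.card_pi]
      _ = ∏ p : m₀.primeFactors, ((p : ℕ) ^ n - 1) :=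
          Finset.prod_congr rfl fun p _ => single p
      _ = ∏ p ∈ m₀.primeFactors, (p ^ n - 1) :=
          Finset.prod_coe_sort m₀.primeFactors (fun p => p ^ n - 1)
  rw [hcount, Finset.prod_pow, ← hq]
  have hm' : m ^ n = q ^ n * Nat.card { x : ZMod m // Φ x = 0 } ^ n := by
    rw [← mul_pow, hqk]
  rw [hm']
  ring
end

section
/- Let g', b be natural numbers, m ≥ 1, and let h : Fin b → ZMod m satisfy ∑_k h k = 0. Set m₀ = Nat.gcd m (Finset.univ.gcd (fun k => (h k).val)). Then Nat.card { ψ : Ξ_{g',b} →* Multiplicative (ZMod m) // Function.Surjective ψ ∧ ∀ k, ψ(γ_k) = Multiplicative.ofAdd (h k) } multiplied by ∏_{p ∈ m₀.primeFactors} p^{2g'} equals m^{2g'} multiplied by ∏_{p ∈ m₀.primeFactors} (p^{2g'} − 1). -/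
open scoped commutatorElement

/-- The single relator `(∏_j [A_j, B_j]) · γ_1 ⋯ γ_b` in the free group on
`(Fin g' ⊕ Fin g') ⊕ Fin b`, where `A_j`, `B_j`, `γ_k` are the free generators indexed by
the left, middle and right summands, products taken in the order of the indices. -/
def surfaceRelator (g' b : ℕ) : FreeGroup ((Fin g' ⊕ Fin g') ⊕ Fin b) :=
  (List.ofFn fun j : Fin g' =>
      ⁅(FreeGroup.of (Sum.inl (Sum.inl j)) : FreeGroup ((Fin g' ⊕ Fin g') ⊕ Fin b)),
        FreeGroup.of (Sum.inl (Sum.inr j))⁆).prod *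
  (List.ofFn fun k : Fin b =>
      (FreeGroup.of (Sum.inr k) : FreeGroup ((Fin g' ⊕ Fin g') ⊕ Fin b))).prod

/-- The fundamental group `Ξ_{g',b}` of a genus `g'` surface with `b` punctures, presented
with generators `A_j, B_j (j < g')`, `γ_k (k < b)` and the single surface relator. -/
abbrev SurfaceGroup (g' b : ℕ) : Type :=
  PresentedGroup ({surfaceRelator g' b} : Set (FreeGroup ((Fin g' ⊕ Fin g') ⊕ Fin b)))

/-- The image `γ_k` of the `k`-th puncture generator in `Ξ_{g',b}`. -/
def SurfaceGroup.gamma {g' b : ℕ} (k : Fin b) : SurfaceGroup g' b :=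
  PresentedGroup.of (Sum.inr k)

/-!
A homomorphism `Ξ_{g',b} → ℤ/mℤ` with prescribed `ψ(γ_k) = h_k` is the same as a free choice of
the `2g'` values `v = (ψ(A_j), ψ(B_j))`, because commutators die in an abelian group and the
relator then only asks for `∑ h_k = 0`. It is surjective iff `gcd(m, h, v) = 1`, that is
`gcd(m₀, v) = 1`. Möbius inversion counts these `v` as `∑_{d ∣ m₀} μ(d) (m/d)^{2g'}
= (m/m₀)^{2g'} J_{2g'}(m₀)`, with Jordan's totient `J_k = μ * (·)^k`, and multiplicativity of `J_k`
gives `J_k(n) ∏_{p ∣ n} p^k = n^k ∏_{p ∣ n} (p^k - 1)`.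
-/

open ArithmeticFunction
open scoped ArithmeticFunction.Moebius ArithmeticFunction.zeta

namespace ArithmeticFunction

def jordanTotient (k : ℕ) : ArithmeticFunction ℤ := μ * pow k

theorem isMultiplicative_jordanTotient (k : ℕ) : (jordanTotient k).IsMultiplicative :=
  isMultiplicative_moebius.mul isMultiplicative_pow.natCast

theorem jordanTotient_apply (k n : ℕ) :
    jordanTotient k n = ∑ d ∈ n.divisors, μ d * ((n / d : ℕ) : ℤ) ^ k := by
  rw [jordanTotient, mul_apply,
    Nat.sum_divisorsAntidiagonal (f := fun a b => μ a * (pow k : ArithmeticFunction ℤ) b)]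
  refine Finset.sum_congr rfl fun d hd => ?_
  have : n / d ≠ 0 := (Nat.div_pos (Nat.divisor_le hd) (Nat.pos_of_mem_divisors hd)).ne'
  simp [pow_apply, this]

theorem jordanTotient_mul_zeta (k : ℕ) : jordanTotient k * ζ = pow k := by
  rw [jordanTotient, mul_right_comm, moebius_mul_coe_zeta, one_mul]

theorem jordanTotient_apply_prime_pow_succ {p : ℕ} (hp : p.Prime) (k i : ℕ) :
    jordanTotient k (p ^ (i + 1)) = (p : ℤ) ^ ((i + 1) * k) - (p : ℤ) ^ (i * k) := by
  have hsum (j : ℕ) :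
      ∑ l ∈ Finset.range (j + 1), jordanTotient k (p ^ l) = (p : ℤ) ^ (j * k) := by
    rw [← Nat.sum_divisors_prime_pow hp, ← coe_mul_zeta_apply, jordanTotient_mul_zeta]
    simp [pow_apply, pow_mul, hp.ne_zero]
  rw [← hsum, ← hsum, Finset.sum_range_succ _ (i + 1), add_sub_cancel_left]

theorem jordanTotient_mul_prod_primeFactors (k : ℕ) {n : ℕ} (hn : n ≠ 0) :
    jordanTotient k n * ∏ p ∈ n.primeFactors, (p : ℤ) ^ k
      = (n : ℤ) ^ k * ∏ p ∈ n.primeFactors, ((p : ℤ) ^ k - 1) := by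
  have key : (jordanTotient k).pmul (prodPrimeFactors fun p => (p : ℤ) ^ k)
      = (pow k : ArithmeticFunction ℤ).pmul (prodPrimeFactors fun p => (p : ℤ) ^ k - 1) := by
    refine (IsMultiplicative.eq_iff_eq_on_prime_powers _
      ((isMultiplicative_jordanTotient k).pmul (IsMultiplicative.prodPrimeFactors _)) _
      (isMultiplicative_pow.natCast.pmul (IsMultiplicative.prodPrimeFactors _))).mpr ?_
    rintro p (_ | i) hp
    · simp [(isMultiplicative_jordanTotient k).map_one]
    have hpi : p ^ (i + 1) ≠ 0 := pow_ne_zero _ hp.ne_zero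
    simp only [pmul_apply, prodPrimeFactors_apply hpi, Nat.primeFactors_prime_pow i.succ_ne_zero hp,
      Finset.prod_singleton, jordanTotient_apply_prime_pow_succ hp, natCoe_apply, pow_apply, hpi,
      and_false, if_false]
    push_cast
    ring
  simpa [pmul_apply, prodPrimeFactors_apply hn, pow_apply, hn] using congr($key n)

theorem sum_divisors_moebius (n : ℕ) :
    ∑ d ∈ n.divisors, (μ d : ℤ) = if n = 1 then 1 else 0 := by
  rw [← coe_mul_zeta_apply, moebius_mul_coe_zeta, one_apply]

end ArithmeticFunction

namespace ZMod

variable {m : ℕ} [NeZero m] {ι : Type*}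

theorem castHom_eq_zero_iff_dvd_val {d : ℕ} (hd : d ∣ m) (x : ZMod m) :
    castHom hd (ZMod d) x = 0 ↔ d ∣ x.val := by
  rw [castHom_apply, cast_eq_val, natCast_eq_zero_iff]

theorem card_dvd_val {d : ℕ} (hd : d ∣ m) : Nat.card {x : ZMod m // d ∣ x.val} = m / d := by
  have : NeZero d := ⟨ne_zero_of_dvd_ne_zero (NeZero.ne m) hd⟩
  let π := (castHom hd (ZMod d)).toAddMonoidHom
  have hindex : π.ker.index = d := by
    rw [AddSubgroup.index_ker, AddMonoidHom.range_eq_top.mpr (castHom_surjective hd),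
      AddSubgroup.card_top, Nat.card_zmod]
  have hker : Nat.card π.ker * d = m := by
    simpa only [hindex, Nat.card_zmod] using π.ker.card_mul_index
  rw [← Nat.eq_div_of_mul_eq_left (NeZero.ne d) hker]
  exact Nat.card_congr (Equiv.subtypeEquivRight fun x => (castHom_eq_zero_iff_dvd_val hd x).symm)

theorem natCast_gcd_val_mem_closure (f : ι → ZMod m) (s : Finset ι) :
    ((s.gcd fun i => (f i).val : ℕ) : ZMod m) ∈ AddSubgroup.closure (Set.range f) := by
  classical
  induction s using Finset.induction_on with
  | empty => simp
  | insert a s _ ih =>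
    have hbezout :=
      congr((($(Nat.gcd_eq_gcd_ab (f a).val (s.gcd fun i => (f i).val)) : ℤ) : ZMod m))
    push_cast [natCast_zmod_val] at hbezout
    rw [Finset.gcd_insert]
    change ((Nat.gcd _ _ : ℕ) : ZMod m) ∈ _
    rw [hbezout, ← zsmul_eq_mul', ← zsmul_eq_mul']
    exact add_mem (zsmul_mem (AddSubgroup.subset_closure (Set.mem_range_self a)) _)
      (zsmul_mem ih _)

variable [Fintype ι]

theorem closure_range_eq_top_iff (f : ι → ZMod m) :
    AddSubgroup.closure (Set.range f) = ⊤ ↔ m.gcd (Finset.univ.gcd fun i => (f i).val) = 1 := by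
  set d := m.gcd (Finset.univ.gcd fun i => (f i).val)
  have hd : d ∣ m := Nat.gcd_dvd_left _ _
  constructor
  · intro htop
    have hle : AddSubgroup.closure (Set.range f) ≤ (castHom hd (ZMod d)).toAddMonoidHom.ker := by
      refine (AddSubgroup.closure_le _).mpr ?_
      rintro _ ⟨i, rfl⟩
      exact (castHom_eq_zero_iff_dvd_val hd (f i)).mpr
        ((Nat.gcd_dvd_right _ _).trans (Finset.gcd_dvd (Finset.mem_univ i)))
    rw [htop, top_le_iff] at hle
    have h1 : castHom hd (ZMod d) 1 = 0 := by
      show 1 ∈ (castHom hd (ZMod d)).toAddMonoidHom.ker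
      exact hle ▸ AddSubgroup.mem_top 1
    rwa [map_one, one_eq_zero_iff] at h1
  · intro hd1
    have hbezout :=
      congr((($(Nat.gcd_eq_gcd_ab m (Finset.univ.gcd fun i => (f i).val)) : ℤ) : ZMod m))
    rw [show m.gcd _ = 1 from hd1] at hbezout
    push_cast [natCast_self, zero_mul, zero_add] at hbezout
    have h1 : (1 : ZMod m) ∈ AddSubgroup.closure (Set.range f) := by
      rw [hbezout, ← zsmul_eq_mul']
      exact zsmul_mem (natCast_gcd_val_mem_closure f _) _
    refine (AddSubgroup.eq_top_iff' _).mpr fun x => ?_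
    simpa using nsmul_mem h1 x.val

theorem card_pi_dvd_val {d : ℕ} (hd : d ∣ m) :
    Nat.card {v : ι → ZMod m // ∀ i, d ∣ (v i).val} = (m / d) ^ Fintype.card ι := by
  rw [Nat.card_congr (Equiv.subtypePiEquivPi (p := fun _ (x : ZMod m) => d ∣ x.val)), Nat.card_pi,
    card_dvd_val hd, Finset.prod_const, Finset.card_univ]

theorem card_gcd_val_eq_one {M : ℕ} (hM : M ∣ m) :
    (Nat.card {v : ι → ZMod m // M.gcd (Finset.univ.gcd fun i => (v i).val) = 1} : ℤ)
      = ∑ d ∈ M.divisors, μ d * ((m / d : ℕ) : ℤ) ^ Fintype.card ι := by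
  classical
  have hdivisors (n : ℕ) : (M.gcd n).divisors = M.divisors.filter (· ∣ n) := by
    ext d
    simp [Nat.dvd_gcd_iff, ne_zero_of_dvd_ne_zero (NeZero.ne m) hM]
  calc (Nat.card {v : ι → ZMod m // M.gcd (Finset.univ.gcd fun i => (v i).val) = 1} : ℤ)
      = ∑ v : ι → ZMod m, ∑ d ∈ M.divisors, if ∀ i, d ∣ (v i).val then μ d else 0 := by
        rw [Nat.card_eq_fintype_card, Fintype.card_subtype, Finset.natCast_card_filter]
        refine Finset.sum_congr rfl fun v _ => ?_
        rw [← sum_divisors_moebius, hdivisors, Finset.sum_filter]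
        simp only [Finset.dvd_gcd_iff, Finset.mem_univ, true_imp_iff]
    _ = ∑ d ∈ M.divisors, μ d * ((m / d : ℕ) : ℤ) ^ Fintype.card ι := by
        rw [Finset.sum_comm]
        refine Finset.sum_congr rfl fun d hd => ?_
        rw [Finset.sum_ite, Finset.sum_const_zero, add_zero, Finset.sum_const,
          ← Fintype.card_subtype, ← Nat.card_eq_fintype_card,
          card_pi_dvd_val ((Nat.dvd_of_mem_divisors hd).trans hM), nsmul_eq_mul, mul_comm,
          Nat.cast_pow]

theorem card_gcd_val_eq_one_mul_prod_primeFactors {M : ℕ} (hM : M ∣ m) :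
    Nat.card {v : ι → ZMod m // M.gcd (Finset.univ.gcd fun i => (v i).val) = 1} *
        ∏ p ∈ M.primeFactors, p ^ Fintype.card ι
      = m ^ Fintype.card ι * ∏ p ∈ M.primeFactors, (p ^ Fintype.card ι - 1) := by
  set k := Fintype.card ι
  have hsplit : ∀ d ∈ M.divisors,
      μ d * ((m / d : ℕ) : ℤ) ^ k = ((m / M : ℕ) : ℤ) ^ k * (μ d * ((M / d : ℕ) : ℤ) ^ k) := by
    intro d hd
    rw [← Nat.div_mul_div hM (Nat.dvd_of_mem_divisors hd)]
    push_cast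
    ring
  have hsub : ∀ p ∈ M.primeFactors, ((p ^ k - 1 : ℕ) : ℤ) = (p : ℤ) ^ k - 1 := fun p hp => by
    rw [Nat.cast_pred (pow_pos (Nat.pos_of_mem_primeFactors hp) _), Nat.cast_pow]
  rw [← Nat.cast_inj (R := ℤ), Nat.cast_mul, Nat.cast_mul, Nat.cast_prod, Nat.cast_prod,
    Finset.prod_congr rfl hsub]
  push_cast
  rw [card_gcd_val_eq_one hM, Finset.sum_congr rfl hsplit, ← Finset.mul_sum, ← jordanTotient_apply,
    mul_assoc, jordanTotient_mul_prod_primeFactors _ (ne_zero_of_dvd_ne_zero (NeZero.ne m) hM),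
    ← mul_assoc, ← mul_pow, ← Nat.cast_mul, Nat.div_mul_cancel hM]

end ZMod

theorem Subgroup.closure_range_ofAdd_eq_top_iff {ι A : Type*} [AddGroup A] (f : ι → A) :
    Subgroup.closure (Set.range (Multiplicative.ofAdd ∘ f)) = ⊤
      ↔ AddSubgroup.closure (Set.range f) = ⊤ := by
  rw [← map_eq_top_iff AddSubgroup.toSubgroup, AddSubgroup.toSubgroup_closure, Set.range_comp,
    Equiv.image_eq_preimage_symm]
  rfl

theorem PresentedGroup.range_toGroup_eq_closure {α G : Type*} [Group G] {rels : Set (FreeGroup α)}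
    {f : α → G} (h : ∀ r ∈ rels, FreeGroup.lift f r = 1) :
    (PresentedGroup.toGroup h).range = Subgroup.closure (Set.range f) := by
  rw [MonoidHom.range_eq_map, ← PresentedGroup.closure_range_of, MonoidHom.map_closure,
    ← Set.range_comp]
  congr 2
  exact funext fun x => PresentedGroup.toGroup.of h

namespace SurfaceGroup

variable {g' b : ℕ} {G : Type*} [CommGroup G]

theorem lift_surfaceRelator (f : (Fin g' ⊕ Fin g') ⊕ Fin b → G) :
    FreeGroup.lift f (surfaceRelator g' b) = ∏ k, f (Sum.inr k) := by
  simp [surfaceRelator, map_list_prod, List.prod_ofFn, commutatorElement_def, mul_comm]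

variable (c : Fin b → G) (hc : ∏ k, c k = 1)

def homOfBoundary (v : Fin g' ⊕ Fin g' → G) : SurfaceGroup g' b →* G :=
  PresentedGroup.toGroup (f := Sum.elim v c) (by rintro r rfl; rw [lift_surfaceRelator]; exact hc)

@[simp]
theorem homOfBoundary_of (v : Fin g' ⊕ Fin g' → G) (x : (Fin g' ⊕ Fin g') ⊕ Fin b) :
    homOfBoundary c hc v (PresentedGroup.of x) = Sum.elim v c x :=
  PresentedGroup.toGroup.of _

theorem surjective_homOfBoundary_iff (v : Fin g' ⊕ Fin g' → G) :
    Function.Surjective (homOfBoundary c hc v)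
      ↔ Subgroup.closure (Set.range (Sum.elim v c)) = ⊤ := by
  rw [← MonoidHom.range_eq_top, homOfBoundary, PresentedGroup.range_toGroup_eq_closure]

def homEquivOfBoundary :
    {ψ : SurfaceGroup g' b →* G // ∀ k, ψ (gamma k) = c k} ≃ (Fin g' ⊕ Fin g' → G) where
  toFun ψ i := ψ.1 (PresentedGroup.of (Sum.inl i))
  invFun v := ⟨homOfBoundary c hc v, fun k => homOfBoundary_of c hc v (Sum.inr k)⟩
  left_inv ψ := Subtype.ext <| PresentedGroup.ext fun x => by
    rcases x with i | k
    · exact homOfBoundary_of c hc _ (Sum.inl i)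
    · exact (homOfBoundary_of c hc _ (Sum.inr k)).trans (ψ.2 k).symm
  right_inv v := funext fun i => homOfBoundary_of c hc v (Sum.inl i)

theorem surjective_homOfBoundary_zmod_iff {m : ℕ} [NeZero m] (h : Fin b → ZMod m)
    (hc : ∏ k, (Multiplicative.ofAdd ∘ h) k = 1) (v : Fin g' ⊕ Fin g' → ZMod m) :
    Function.Surjective (homOfBoundary _ hc (Multiplicative.ofAdd ∘ v))
      ↔ (m.gcd (Finset.univ.gcd fun k => (h k).val)).gcd
          (Finset.univ.gcd fun i => (v i).val) = 1 := by
  have hgcd : m.gcd (Finset.univ.gcd fun j => (Sum.elim v h j).val)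
      = (m.gcd (Finset.univ.gcd fun k => (h k).val)).gcd (Finset.univ.gcd fun i => (v i).val) :=
    eq_of_forall_dvd' fun d => by
      simp only [Nat.dvd_gcd_iff, Finset.dvd_gcd_iff, Finset.mem_univ, true_imp_iff, Sum.forall,
        Sum.elim_inl, Sum.elim_inr]
      tauto
  rw [surjective_homOfBoundary_iff, ← Sum.comp_elim, Subgroup.closure_range_ofAdd_eq_top_iff,
    ZMod.closure_range_eq_top_iff, hgcd]

end SurfaceGroup

/-- For `G = ℤ/mℤ`, the number of surjections `ψ : Ξ_{g',b} → ℤ/mℤ` with prescribed boundary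
monodromies `ψ(γ_k) = h_k` (where `∑ h_k = 0`) is `m^{2g'} ∏_{p | m₀ prime} (1 − p^{−2g'})`
with `m₀ = gcd(m, h₁, …, h_b)`, stated in denominator-cleared form. -/
theorem card_surjections_surfaceGroup_zmod (g' b m : ℕ) (hm : 1 ≤ m)
    (h : Fin b → ZMod m) (hsum : ∑ k, h k = 0) :
    Nat.card { ψ : SurfaceGroup g' b →* Multiplicative (ZMod m) //
        Function.Surjective ψ ∧
          ∀ k : Fin b, ψ (SurfaceGroup.gamma k) = Multiplicative.ofAdd (h k) } *
      ∏ p ∈ (Nat.gcd m (Finset.univ.gcd fun k => (h k).val)).primeFactors, p ^ (2 * g')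
    = m ^ (2 * g') *
      ∏ p ∈ (Nat.gcd m (Finset.univ.gcd fun k => (h k).val)).primeFactors,
        (p ^ (2 * g') - 1) := by
  have : NeZero m := ⟨by omega⟩
  set M := m.gcd (Finset.univ.gcd fun k => (h k).val)
  have hc : ∏ k, (Multiplicative.ofAdd ∘ h) k = 1 := by
    simpa [← ofAdd_sum] using congrArg Multiplicative.ofAdd hsum
  let e := (SurfaceGroup.homEquivOfBoundary (g' := g') _ hc).trans
    (Equiv.piCongrRight fun _ => Multiplicative.toAdd)
  have hcard : Nat.card { ψ : SurfaceGroup g' b →* Multiplicative (ZMod m) //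
        Function.Surjective ψ ∧
          ∀ k : Fin b, ψ (SurfaceGroup.gamma k) = Multiplicative.ofAdd (h k) }
      = Nat.card {v : Fin g' ⊕ Fin g' → ZMod m // M.gcd (Finset.univ.gcd fun i => (v i).val) = 1} :=
    Nat.card_congr <| (Equiv.subtypeEquivRight fun _ => and_comm).trans <|
      (Equiv.subtypeSubtypeEquivSubtypeInter _ _).symm.trans <|
      (e.symm.subtypeEquiv fun v =>
        (SurfaceGroup.surjective_homOfBoundary_zmod_iff h hc v).symm).symm
  have hcount := ZMod.card_gcd_val_eq_one_mul_prod_primeFactors (ι := Fin g' ⊕ Fin g')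
    (Nat.gcd_dvd_left m (Finset.univ.gcd fun k => (h k).val))
  rwa [Fintype.card_sum, Fintype.card_fin, ← two_mul, ← hcard] at hcount
end

section
/- For every m ≥ 1 and every natural number n, Nat.card { a : Fin n → ZMod m // AddSubgroup.closure (Set.range a) = ⊤ } multiplied by ∏_{p ∈ m.primeFactors} p^n equals m^n multiplied by ∏_{p ∈ m.primeFactors} (p^n − 1). Equivalently, the number of n-tuples of elements of ℤ/mℤ that generate ℤ/mℤ as an additive group is m^n ∏_{p | m prime} (1 − p^{−n}). -/
open Function

private lemma aux_count {A B : Type*} [AddCommGroup A] [AddCommGroup B]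
    (F : A →+ B) (hF : Function.Surjective F) (P : B → Prop) :
    Nat.card {a : A // P (F a)} = Nat.card F.ker * Nat.card {b : B // P b} := by
  let e := QuotientAddGroup.quotientKerEquivOfSurjective F hF
  have hmk : ∀ a : A, e (QuotientAddGroup.mk a) = F a := fun a => rfl
  have key : {a : A // P (F a)} ≃
      ((QuotientAddGroup.mk (s := F.ker)) ⁻¹' (⇑e ⁻¹' {b | P b})) :=
    Equiv.subtypeEquivRight fun a => by
      simp only [Set.mem_preimage, Set.mem_setOf_eq, hmk]
  rw [Nat.card_congr key,
    Nat.card_congr (QuotientAddGroup.preimageMkEquivAddSubgroupProdSet F.ker _),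
    Nat.card_prod]
  congr 1
  exact Nat.card_congr (e.toEquiv.subtypeEquiv fun q => Iff.rfl)

private lemma closure_top_iff {m : ℕ} [NeZero m] {n : ℕ} (a : Fin n → ZMod m) :
    AddSubgroup.closure (Set.range a) = ⊤ ↔
      ∀ p : m.primeFactors,
        ∃ i, ZMod.castHom (Nat.dvd_of_mem_primeFactors p.2) (ZMod (p : ℕ)) (a i) ≠ 0 := by
  constructor
  · intro h p
    have hp : (p : ℕ).Prime := Nat.prime_of_mem_primeFactors p.2
    haveI : Fact (1 < (p : ℕ)) := ⟨hp.one_lt⟩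
    by_contra hc
    push_neg at hc
    let f := (ZMod.castHom (Nat.dvd_of_mem_primeFactors p.2) (ZMod (p : ℕ))).toAddMonoidHom
    have hle : AddSubgroup.closure (Set.range a) ≤ f.ker := by
      rw [AddSubgroup.closure_le]
      rintro x ⟨i, rfl⟩
      exact hc i
    rw [h, top_le_iff] at hle
    refine one_ne_zero (α := ZMod (p : ℕ)) ?_
    rw [← map_one (ZMod.castHom (Nat.dvd_of_mem_primeFactors p.2) (ZMod (p : ℕ)))]
    exact AddMonoidHom.mem_ker.mp (hle.symm ▸ AddSubgroup.mem_top 1)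
  · intro hgen
    by_contra hne
    set H := AddSubgroup.closure (Set.range a) with hH
    have hd : Nat.card H ∣ m := by
      simpa [Nat.card_zmod] using AddSubgroup.card_addSubgroup_dvd_card H
    set d := Nat.card H with hdd
    have hdpos : 0 < d := Nat.card_pos
    obtain ⟨k, hk⟩ := hd
    have hk1 : k ≠ 1 := by
      rintro rfl
      exact hne (AddSubgroup.eq_top_of_card_eq H (by rw [Nat.card_zmod]; omega))
    have hk0 : k ≠ 0 := by
      rintro rfl
      exact NeZero.ne m (by omega)
    have hp : k.minFac.Prime := Nat.minFac_prime hk1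
    haveI : NeZero k.minFac := ⟨hp.pos.ne'⟩
    have hpm : k.minFac ∣ m := (Nat.minFac_dvd k).trans ⟨d, by rw [hk, mul_comm]⟩
    obtain ⟨p, hpmem⟩ : ∃ p : m.primeFactors, (p : ℕ) = k.minFac :=
      ⟨⟨k.minFac, Nat.mem_primeFactors.mpr ⟨hp, hpm, NeZero.ne m⟩⟩, rfl⟩
    obtain ⟨i, hi⟩ := hgen p
    apply hi
    have hmem : a i ∈ H := AddSubgroup.subset_closure ⟨i, rfl⟩
    have h0 : d • a i = 0 := by
      have h2 : (d • (⟨a i, hmem⟩ : H) : H) = 0 := by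
        rw [hdd]; exact card_nsmul_eq_zero'
      simpa using congrArg (Subtype.val) h2
    have hdvd : m ∣ d * (a i).val := by
      have : ((d * (a i).val : ℕ) : ZMod m) = 0 := by
        push_cast
        rw [ZMod.natCast_val, ZMod.cast_id, ← nsmul_eq_mul]
        exact h0
      exact (ZMod.natCast_eq_zero_iff _ _).mp this
    have hkval : k ∣ (a i).val := by
      rcases hdvd with ⟨c, hc⟩
      exact ⟨c, Nat.eq_of_mul_eq_mul_left hdpos (by rw [hc, hk, mul_assoc])⟩
    have hpval : (p : ℕ) ∣ (a i).val := hpmem ▸ (Nat.minFac_dvd k).trans hkval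
    haveI : NeZero (p : ℕ) := ⟨(hpmem ▸ hp).pos.ne'⟩
    have hcast : (ZMod.castHom (Nat.dvd_of_mem_primeFactors p.2) (ZMod (p : ℕ))) (a i)
        = (((a i).val : ℕ) : ZMod (p : ℕ)) := by
      rw [ZMod.castHom_apply, ← ZMod.natCast_val]
    rw [hcast, ZMod.natCast_eq_zero_iff]
    exact hpval

/-- The number of `n`-tuples of elements of `ℤ/mℤ` generating `ℤ/mℤ` as an additive group is
`m^n ∏_{p | m prime} (1 − p^{−n})`, stated in denominator-cleared form: the count times
`∏_{p | m} p^n` equals `m^n ∏_{p | m} (p^n − 1)`. -/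
theorem card_generating_tuples_zmod (m : ℕ) (hm : 1 ≤ m) (n : ℕ) :
    Nat.card { a : Fin n → ZMod m // AddSubgroup.closure (Set.range a) = ⊤ } *
      ∏ p ∈ m.primeFactors, p ^ n
    = m ^ n * ∏ p ∈ m.primeFactors, (p ^ n - 1) := by
  haveI : NeZero m := ⟨by omega⟩
  classical
  set s := m.primeFactors with hs
  have hprime : ∀ p : s, (p : ℕ).Prime := fun p => Nat.prime_of_mem_primeFactors p.2
  haveI : ∀ p : s, NeZero ((p : ℕ)) := fun p => ⟨(hprime p).pos.ne'⟩
  have hcop : Pairwise (Nat.Coprime on fun p : s => (p : ℕ)) := fun p q hpq =>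
    (Nat.coprime_primes (hprime p) (hprime q)).mpr fun h => hpq (Subtype.ext h)
  have hrprod : (∏ p : s, (p : ℕ)) = ∏ p ∈ s, p := Finset.prod_coe_sort s (fun p => p)
  have hrdvd : (∏ p : s, (p : ℕ)) ∣ m := by
    rw [hrprod]; exact Nat.prod_primeFactors_dvd m
  haveI : NeZero (∏ p : s, (p : ℕ)) :=
    ⟨Finset.prod_ne_zero_iff.mpr fun p _ => (hprime p).pos.ne'⟩
  let g : ZMod m →+* ∀ p : s, ZMod (p : ℕ) :=
    Pi.ringHom fun p => ZMod.castHom (Nat.dvd_of_mem_primeFactors p.2) (ZMod (p : ℕ))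
  have hgsurj : Function.Surjective g := by
    have h1 : Function.Surjective (ZMod.castHom hrdvd (ZMod (∏ p : s, (p : ℕ)))) := fun y =>
      ⟨((y.val : ℕ) : ZMod m), by rw [map_natCast]; exact ZMod.natCast_rightInverse y⟩
    have hcomp : g = ((ZMod.prodEquivPi (fun p : s => (p : ℕ)) hcop).toRingHom.comp
        (ZMod.castHom hrdvd _)) := RingHom.ext_zmod _ _
    rw [hcomp]
    exact (ZMod.prodEquivPi (fun p : s => (p : ℕ)) hcop).surjective.comp h1
  let G := g.toAddMonoidHom
  have hGsurj : Function.Surjective G := hgsurj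
  have hKmul : Nat.card G.ker * (∏ p ∈ s, p) = m := by
    have h1 := AddSubgroup.card_eq_card_quotient_mul_card_addSubgroup G.ker
    rw [Nat.card_zmod] at h1
    have hq : Nat.card (ZMod m ⧸ G.ker) = ∏ p ∈ s, p := by
      rw [Nat.card_congr (QuotientAddGroup.quotientKerEquivOfSurjective G hGsurj).toEquiv,
        Nat.card_pi]
      simp_rw [Nat.card_zmod]
      exact hrprod
    rw [hq] at h1
    rw [mul_comm]
    exact h1.symm
  let F : (Fin n → ZMod m) →+ (Fin n → ∀ p : s, ZMod (p : ℕ)) :=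
    { toFun := fun a i => G (a i)
      map_zero' := by funext i; simp
      map_add' := by intro x y; funext i; simp }
  have hFsurj : Function.Surjective F := fun b => by
    choose c hc using fun i => hGsurj (b i)
    exact ⟨c, funext hc⟩
  have hFker : Nat.card F.ker = (Nat.card G.ker) ^ n := by
    have e : F.ker ≃ (Fin n → G.ker) :=
      { toFun := fun a i => ⟨a.1 i, by
          have h2 := AddMonoidHom.mem_ker.mp a.2
          exact AddMonoidHom.mem_ker.mpr (congrFun h2 i)⟩
        invFun := fun b => ⟨fun i => (b i).1, AddMonoidHom.mem_ker.mpr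
          (funext fun i => AddMonoidHom.mem_ker.mp (b i).2)⟩
        left_inv := fun a => rfl
        right_inv := fun b => funext fun i => Subtype.ext rfl }
    rw [Nat.card_congr e, Nat.card_fun, Nat.card_eq_fintype_card (α := Fin n), Fintype.card_fin]
  have hiff : ∀ a : Fin n → ZMod m,
      (AddSubgroup.closure (Set.range a) = ⊤) ↔ (∀ p : s, ∃ i, F a i p ≠ 0) := fun a =>
    closure_top_iff a
  have hcount : Nat.card { a : Fin n → ZMod m // AddSubgroup.closure (Set.range a) = ⊤ }
      = Nat.card F.ker *
        Nat.card {b : Fin n → ∀ p : s, ZMod (p : ℕ) // ∀ p : s, ∃ i, b i p ≠ 0} := by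
    rw [Nat.card_congr (Equiv.subtypeEquivRight hiff)]
    exact aux_count F hFsurj (fun b => ∀ p : s, ∃ i, b i p ≠ 0)
  have htarget : Nat.card {b : Fin n → ∀ p : s, ZMod (p : ℕ) // ∀ p : s, ∃ i, b i p ≠ 0}
      = ∏ p ∈ s, (p ^ n - 1) := by
    have e1 : {b : Fin n → ∀ p : s, ZMod (p : ℕ) // ∀ p : s, ∃ i, b i p ≠ 0}
        ≃ ∀ p : s, {c : Fin n → ZMod (p : ℕ) // c ≠ 0} := by
      refine Equiv.trans ((Equiv.piComm _).subtypeEquiv fun b => ?_) Equiv.subtypePiEquivPi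
      refine forall_congr' fun p => ?_
      rw [Function.ne_iff]
      simp [Function.swap]
    rw [Nat.card_congr e1, Nat.card_pi, ← Finset.prod_coe_sort s (fun p => p ^ n - 1)]
    refine Finset.prod_congr rfl fun p _ => ?_
    have : Nat.card {c : Fin n → ZMod ((p : s) : ℕ) // ¬ c = 0} =
        (p : ℕ) ^ n - 1 := by
      rw [Nat.card_eq_fintype_card, Fintype.card_subtype_compl,
        Fintype.card_subtype_eq (0 : Fin n → ZMod ((p : s) : ℕ)),
        Fintype.card_fun, ZMod.card, Fintype.card_fin]
    exact this
  rw [hcount, htarget, hFker]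
  have hpow : (∏ p ∈ s, p ^ n) = (∏ p ∈ s, p) ^ n := by rw [Finset.prod_pow]
  rw [hpow, mul_right_comm, ← mul_pow, hKmul]
end

section
/- Let g', b be natural numbers, let A be a commutative group, and let h : Fin b → A. If there exists a group homomorphism ψ : Ξ_{g',b} →* A with ψ(γ_k) = h k for all k, then ∏_k h k = 1. Conversely, if ∏_k h k = 1, then the map sending ψ to the pair of tuples ((ψ(A_j))_{j}, (ψ(B_j))_{j}) is a bijection from { ψ : Ξ_{g',b} →* A // ∀ k, ψ(γ_k) = h k } onto (Fin g' → A) × (Fin g' → A). -/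
open scoped commutatorElement

/-- The image `A_j` of the `j`-th handle generator in `Ξ_{g',b}`. -/
def SurfaceGroup.A {g' b : ℕ} (j : Fin g') : SurfaceGroup g' b :=
  PresentedGroup.of (Sum.inl (Sum.inl j))

/-- The image `B_j` of the `j`-th handle generator in `Ξ_{g',b}`. -/
def SurfaceGroup.B {g' b : ℕ} (j : Fin g') : SurfaceGroup g' b :=
  PresentedGroup.of (Sum.inl (Sum.inr j))

/-! Every commutator vanishes in an abelian group, so a homomorphism out of the free group kills
the surface relator exactly when it kills `γ_1 ⋯ γ_b`; the universal property of the presentation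
does the rest. -/

theorem map_surfaceRelator {g' b : ℕ} {G : Type*} [CommGroup G]
    (φ : FreeGroup ((Fin g' ⊕ Fin g') ⊕ Fin b) →* G) :
    φ (surfaceRelator g' b) = ∏ k, φ (FreeGroup.of (Sum.inr k)) := by
  simp only [surfaceRelator, map_mul, map_list_prod, List.map_ofFn, Function.comp_def,
    map_commutatorElement, List.prod_ofFn]
  rw [Finset.prod_eq_one fun _ _ => commutatorElement_eq_one_iff_commute.mpr (Commute.all _ _),
    one_mul]

namespace SurfaceGroup

variable {g' b : ℕ} {G : Type*} [CommGroup G]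

theorem prod_map_gamma (ψ : SurfaceGroup g' b →* G) : ∏ k, ψ (gamma k) = 1 := by
  have := map_surfaceRelator (ψ.comp (PresentedGroup.mk _))
  rw [MonoidHom.comp_apply, PresentedGroup.one_of_mem (Set.mem_singleton _), map_one] at this
  exact this.symm

theorem hom_ext {ψ₁ ψ₂ : SurfaceGroup g' b →* G} (hA : ∀ j, ψ₁ (A j) = ψ₂ (A j))
    (hB : ∀ j, ψ₁ (B j) = ψ₂ (B j)) (hγ : ∀ k, ψ₁ (gamma k) = ψ₂ (gamma k)) : ψ₁ = ψ₂ :=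
  PresentedGroup.ext fun
    | .inl (.inl j) => hA j
    | .inl (.inr j) => hB j
    | .inr k => hγ k

def lift (a c : Fin g' → G) (h : Fin b → G) (hh : ∏ k, h k = 1) : SurfaceGroup g' b →* G :=
  PresentedGroup.toGroup (f := Sum.elim (Sum.elim a c) h) <| by
    rintro r rfl
    simpa only [map_surfaceRelator, FreeGroup.lift_apply_of, Sum.elim_inr] using hh

variable (a c : Fin g' → G) (h : Fin b → G) (hh : ∏ k, h k = 1)

@[simp] theorem lift_A (j : Fin g') : lift a c h hh (A j) = a j := PresentedGroup.toGroup.of _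

@[simp] theorem lift_B (j : Fin g') : lift a c h hh (B j) = c j := PresentedGroup.toGroup.of _

@[simp] theorem lift_gamma (k : Fin b) : lift a c h hh (gamma k) = h k :=
  PresentedGroup.toGroup.of _

end SurfaceGroup

/-- Homomorphisms from the surface group `Ξ_{g',b}` to an abelian group `A` with prescribed
values `h_k` at the puncture generators exist only if `∏ h_k = 1`, and if `∏ h_k = 1` they
correspond bijectively to the free choices of images of the handle generators `A_j, B_j`. -/
theorem surfaceGroup_hom_abelian (g' b : ℕ) (A : Type*) [CommGroup A] (h : Fin b → A) :
    ((∃ ψ : SurfaceGroup g' b →* A, ∀ k : Fin b, ψ (SurfaceGroup.gamma k) = h k) →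
      ∏ k, h k = 1) ∧
    (∏ k, h k = 1 →
      Function.Bijective
        (fun ψ : { ψ : SurfaceGroup g' b →* A // ∀ k : Fin b, ψ (SurfaceGroup.gamma k) = h k } =>
          ((fun j : Fin g' => ψ.1 (SurfaceGroup.A j), fun j : Fin g' => ψ.1 (SurfaceGroup.B j)) :
            (Fin g' → A) × (Fin g' → A)))) := by
  refine ⟨fun ⟨ψ, hψ⟩ => by simpa only [hψ] using SurfaceGroup.prod_map_gamma ψ,
    fun hh => ⟨?_, ?_⟩⟩
  · rintro ⟨ψ₁, hψ₁⟩ ⟨ψ₂, hψ₂⟩ heq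
    obtain ⟨hA, hB⟩ := Prod.mk.inj heq
    exact Subtype.ext <|
      SurfaceGroup.hom_ext (congrFun hA) (congrFun hB) fun k => (hψ₁ k).trans (hψ₂ k).symm
  · rintro ⟨a, c⟩
    exact ⟨⟨SurfaceGroup.lift a c h hh, SurfaceGroup.lift_gamma a c h hh⟩, by ext j <;> simp⟩
end
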